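/- For every real number z, erf(z)² ≤ 1 − exp(−(4/π) z²). -/

import Mathlib

/-!
For `z ≥ 0`, Fubini writes `erf z ^ 2` as `4 / π` times the integral of `exp (-(x² + y²))` over
the square `(0, z]²`. The quarter disk of radius `R = 2z / √π` has the same area `z²`, and the
integrand, a decreasing function of `x² + y²`, is at most `exp (-R²)` on the part of the square
outside the disk and at least `exp (-R²)` on the part of the disk outside the square. Hence the
integral over the square is at most the integral over the quarter disk, which polar coordinates
evaluate to `π / 4 * (1 - exp (-R²))`. Since `erf` is odd, the case `z < 0` follows.
-/

/-- The Gauss error function `erf(z) = ∫_0^z (2/√π) exp(-t²) dt`. -/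
noncomputable def erf (z : ℝ) : ℝ :=
  ∫ t in (0 : ℝ)..z, 2 / Real.sqrt Real.pi * Real.exp (-t ^ 2)

open Real MeasureTheory Set

theorem setIntegral_le_setIntegral_of_measure_eq {α : Type*} [MeasurableSpace α]
    {μ : Measure α} {f : α → ℝ} {s t : Set α} {c : ℝ} (hs : MeasurableSet s)
    (ht : MeasurableSet t) (hst : μ s = μ t) (ht_fin : μ t ≠ ⊤) (hfs : IntegrableOn f s μ)
    (hft : IntegrableOn f t μ) (h_out : ∀ x ∈ s \ t, f x ≤ c) (h_in : ∀ x ∈ t \ s, c ≤ f x) :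
    ∫ x in s, f x ∂μ ≤ ∫ x in t, f x ∂μ := by
  have h_diff : μ.real (s \ t) = μ.real (t \ s) := by
    rw [measureReal_def, measureReal_def, measure_sdiff_symm hs.nullMeasurableSet
      ht.nullMeasurableSet hst (measure_ne_top_of_subset inter_subset_right ht_fin)]
  have h_fin_sdiff : μ (s \ t) ≠ ⊤ := measure_ne_top_of_subset sdiff_subset (hst ▸ ht_fin)
  have h_fin_sdiff' : μ (t \ s) ≠ ⊤ := measure_ne_top_of_subset sdiff_subset ht_fin
  have h_le : ∫ x in s \ t, f x ∂μ ≤ ∫ x in t \ s, f x ∂μ :=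
    calc ∫ x in s \ t, f x ∂μ ≤ ∫ _ in s \ t, c ∂μ :=
          setIntegral_mono_on (hfs.mono_set sdiff_subset) (integrableOn_const h_fin_sdiff)
            (hs.diff ht) h_out
      _ = ∫ _ in t \ s, c ∂μ := by rw [setIntegral_const, setIntegral_const, h_diff]
      _ ≤ ∫ x in t \ s, f x ∂μ :=
          setIntegral_mono_on (integrableOn_const h_fin_sdiff') (hft.mono_set sdiff_subset)
            (ht.diff hs) h_in
  rw [← integral_inter_add_sdiff ht hfs, ← integral_inter_add_sdiff hs hft, inter_comm]
  gcongr

def quarterDisk (R : ℝ) : Set (ℝ × ℝ) := {p | 0 < p.1 ∧ 0 < p.2 ∧ p.1 ^ 2 + p.2 ^ 2 < R ^ 2}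

theorem isOpen_quarterDisk (R : ℝ) : IsOpen (quarterDisk R) :=
  (isOpen_lt continuous_const continuous_fst).inter
    ((isOpen_lt continuous_const continuous_snd).inter
      (isOpen_lt (continuous_fst.pow 2 |>.add (continuous_snd.pow 2)) continuous_const))

theorem quarterDisk_subset_closedBall (R : ℝ) : quarterDisk R ⊆ Metric.closedBall 0 |R| := by
  rintro ⟨x, y⟩ ⟨-, -, hxy⟩
  rw [mem_closedBall_zero_iff, Prod.norm_def, Real.norm_eq_abs, Real.norm_eq_abs]
  exact max_le (sq_le_sq.1 (by nlinarith)) (sq_le_sq.1 (by nlinarith))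

theorem volume_quarterDisk_ne_top (R : ℝ) : volume (quarterDisk R) ≠ ⊤ :=
  measure_ne_top_of_subset (quarterDisk_subset_closedBall R) measure_closedBall_lt_top.ne

theorem polarCoord_symm_mem_quarterDisk_iff {R : ℝ} (hR : 0 ≤ R) {p : ℝ × ℝ}
    (hp : p ∈ polarCoord.target) :
    polarCoord.symm p ∈ quarterDisk R ↔ p ∈ Ioo 0 R ×ˢ Ioo 0 (π / 2) := by
  obtain ⟨r, θ⟩ := p
  obtain ⟨hr, hθ⟩ : 0 < r ∧ -π < θ ∧ θ < π := by simpa using hp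
  have h_norm : (r * cos θ) ^ 2 + (r * sin θ) ^ 2 = r ^ 2 := by
    linear_combination r ^ 2 * sin_sq_add_cos_sq θ
  simp only [polarCoord_symm_apply, quarterDisk, mem_ofPred_eq, mem_prod, mem_Ioo, h_norm,
    mul_pos_iff_of_pos_left hr, pow_lt_pow_iff_left₀ hr.le hR two_ne_zero, hr, true_and]
  constructor
  · rintro ⟨hcos, hsin, hrR⟩
    have hθ₀ : 0 < θ := by
      by_contra! h
      exact (sin_nonpos_of_nonpos_of_neg_pi_le h hθ.1.le).not_gt hsin
    refine ⟨hrR, hθ₀, ?_⟩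
    by_contra! h
    exact (cos_nonpos_of_pi_div_two_le_of_le h (by linarith)).not_gt hcos
  · rintro ⟨hrR, hθ₀, hθ₁⟩
    exact ⟨cos_pos_of_mem_Ioo ⟨by linarith, hθ₁⟩, sin_pos_of_pos_of_lt_pi hθ₀ hθ.2, hrR⟩

theorem integral_quarterDisk_radial {R : ℝ} (hR : 0 ≤ R) (f : ℝ → ℝ) :
    ∫ p in quarterDisk R, f (p.1 ^ 2 + p.2 ^ 2) = π / 2 * ∫ r in 0..R, r * f (r ^ 2) := by
  have h_box : Ioo 0 R ×ˢ Ioo 0 (π / 2) ⊆ polarCoord.target := by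
    rintro ⟨r, θ⟩ ⟨hr, hθ⟩
    exact ⟨hr.1, by linarith [hθ.1, pi_pos], by linarith [hθ.2, pi_pos]⟩
  have h_polar : EqOn (fun p ↦ p.1 • (quarterDisk R).indicator
        (fun q ↦ f (q.1 ^ 2 + q.2 ^ 2)) (polarCoord.symm p))
      ((Ioo 0 R ×ˢ Ioo 0 (π / 2)).indicator (fun q ↦ q.1 * f (q.1 ^ 2))) polarCoord.target := by
    intro p hp
    dsimp only
    have h_norm : (p.1 * cos p.2) ^ 2 + (p.1 * sin p.2) ^ 2 = p.1 ^ 2 := by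
      linear_combination p.1 ^ 2 * sin_sq_add_cos_sq p.2
    by_cases h : p ∈ Ioo 0 R ×ˢ Ioo 0 (π / 2)
    · have h' := (polarCoord_symm_mem_quarterDisk_iff hR hp).2 h
      rw [indicator_of_mem h, indicator_of_mem h']
      simp only [polarCoord_symm_apply, h_norm, smul_eq_mul]
    · have h' := mt (polarCoord_symm_mem_quarterDisk_iff hR hp).1 h
      rw [indicator_of_notMem h, indicator_of_notMem h', smul_zero]
  rw [← integral_indicator (isOpen_quarterDisk R).measurableSet, ← integral_comp_polarCoord_symm,
    setIntegral_congr_fun polarCoord.open_target.measurableSet h_polar,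
    setIntegral_indicator (measurableSet_Ioo.prod measurableSet_Ioo),
    inter_eq_self_of_subset_right h_box, Measure.volume_eq_prod, ← Measure.prod_restrict,
    integral_fun_fst (fun r ↦ r * f (r ^ 2)), measureReal_restrict_apply_univ,
    volume_real_Ioo_of_le (by positivity), intervalIntegral.integral_of_le hR,
    integral_Ioc_eq_integral_Ioo, smul_eq_mul, sub_zero]

theorem volume_quarterDisk {R : ℝ} (hR : 0 ≤ R) :
    volume (quarterDisk R) = ENNReal.ofReal (π / 4 * R ^ 2) := by
  have h := integral_quarterDisk_radial hR fun _ ↦ 1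
  simp only [mul_one, integral_id, setIntegral_const, smul_eq_mul] at h
  rw [← ofReal_measureReal (volume_quarterDisk_ne_top R), h]
  ring_nf

theorem integral_quarterDisk_exp_neg {R : ℝ} (hR : 0 ≤ R) :
    ∫ p in quarterDisk R, exp (-(p.1 ^ 2 + p.2 ^ 2)) = π / 4 * (1 - exp (-R ^ 2)) := by
  have h_deriv (r : ℝ) : HasDerivAt (fun r ↦ -exp (-r ^ 2) / 2) (r * exp (-r ^ 2)) r := by
    refine ((hasDerivAt_pow 2 r).fun_neg.exp.fun_neg.div_const 2).congr_deriv ?_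
    push_cast
    ring
  rw [integral_quarterDisk_radial hR fun s ↦ exp (-s),
    intervalIntegral.integral_eq_sub_of_hasDerivAt (fun r _ ↦ h_deriv r)
      ((by fun_prop : Continuous fun r ↦ r * exp (-r ^ 2)).intervalIntegrable _ _)]
  rw [zero_pow two_ne_zero, neg_zero, exp_zero]
  ring

theorem integrable_exp_neg_sq_add_sq :
    Integrable fun p : ℝ × ℝ ↦ exp (-(p.1 ^ 2 + p.2 ^ 2)) := by
  have h := integrable_exp_neg_mul_sq one_pos
  have h_eq : (fun p : ℝ × ℝ ↦ exp (-(p.1 ^ 2 + p.2 ^ 2))) =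
      fun p ↦ exp (-1 * p.1 ^ 2) * exp (-1 * p.2 ^ 2) := by
    ext p
    rw [← exp_add]
    ring_nf
  rw [h_eq]
  exact h.mul_prod h

theorem sq_two_div_sqrt_pi : (2 / √π) ^ 2 = 4 / π := by
  rw [div_pow, sq_sqrt pi_pos.le]
  norm_num

theorem erf_neg (z : ℝ) : erf (-z) = -erf z := by
  have h := intervalIntegral.integral_comp_neg (a := 0) (b := z)
    fun t ↦ 2 / √π * exp (-t ^ 2)
  simp only [neg_sq, neg_zero] at h
  rw [erf, erf, intervalIntegral.integral_symm, h]

theorem erf_sq_eq_setIntegral {z : ℝ} (hz : 0 ≤ z) :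
    erf z ^ 2 = 4 / π * ∫ p in Ioc 0 z ×ˢ Ioc 0 z, exp (-(p.1 ^ 2 + p.2 ^ 2)) := by
  simp_rw [neg_add, exp_add]
  rw [Measure.volume_eq_prod, setIntegral_prod_mul (fun x ↦ exp (-x ^ 2)) (fun y ↦ exp (-y ^ 2)),
    erf, intervalIntegral.integral_const_mul, intervalIntegral.integral_of_le hz, mul_pow,
    sq_two_div_sqrt_pi, sq]

theorem erf_sq_le_of_nonneg {z : ℝ} (hz : 0 ≤ z) :
    erf z ^ 2 ≤ 1 - exp (-(4 / π) * z ^ 2) := by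
  set R := 2 / √π * z
  have hR : 0 ≤ R := by positivity
  have hR_sq : R ^ 2 = 4 / π * z ^ 2 := by rw [mul_pow, sq_two_div_sqrt_pi]
  have h_vol : volume (Ioc 0 z ×ˢ Ioc 0 z) = volume (quarterDisk R) := by
    rw [volume_quarterDisk hR, hR_sq, Measure.volume_eq_prod, Measure.prod_prod, Real.volume_Ioc,
      sub_zero, ← ENNReal.ofReal_mul hz]
    field_simp
  have h_le : ∫ p in Ioc 0 z ×ˢ Ioc 0 z, exp (-(p.1 ^ 2 + p.2 ^ 2)) ≤
      ∫ p in quarterDisk R, exp (-(p.1 ^ 2 + p.2 ^ 2)) := by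
    refine setIntegral_le_setIntegral_of_measure_eq (c := exp (-R ^ 2))
      (measurableSet_Ioc.prod measurableSet_Ioc) (isOpen_quarterDisk R).measurableSet h_vol
      (volume_quarterDisk_ne_top R) integrable_exp_neg_sq_add_sq.integrableOn
      integrable_exp_neg_sq_add_sq.integrableOn ?_ ?_
    · rintro ⟨x, y⟩ ⟨⟨hx, hy⟩, h_out⟩
      have : R ^ 2 ≤ x ^ 2 + y ^ 2 := not_lt.1 fun h ↦ h_out ⟨hx.1, hy.1, h⟩
      gcongr
    · rintro ⟨x, y⟩ ⟨⟨-, -, h_in⟩, -⟩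
      gcongr
  calc erf z ^ 2 = 4 / π * ∫ p in Ioc 0 z ×ˢ Ioc 0 z, exp (-(p.1 ^ 2 + p.2 ^ 2)) :=
        erf_sq_eq_setIntegral hz
    _ ≤ 4 / π * ∫ p in quarterDisk R, exp (-(p.1 ^ 2 + p.2 ^ 2)) := by gcongr
    _ = 1 - exp (-(4 / π) * z ^ 2) := by
        rw [integral_quarterDisk_exp_neg hR, hR_sq, neg_mul]
        field_simp

/-- For every real `z`, `erf(z)² ≤ 1 − exp(−(4/π) z²)`. -/
theorem erf_sq_le (z : ℝ) :
    erf z ^ 2 ≤ 1 - Real.exp (-(4 / Real.pi) * z ^ 2) := by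
  rcases le_total 0 z with hz | hz
  · exact erf_sq_le_of_nonneg hz
  · simpa [erf_neg] using erf_sq_le_of_nonneg (neg_nonneg.2 hz)
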